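/- For a complex number λ, the exponential sequence (λ^k)_{k∈ℕ} belongs to X if and only if |λ| < 1 or λ = 1. -/

import Mathlib

/-!
Put `a_k = λ^k / k`. For `|λ| < 1` the sequence `a` is absolutely summable, which forces both
conditions of `X`. Otherwise everything rests on the identity
`a_{k+1} - a_k = λ^k ((λ - 1)/(k + 1) - 1/(k (k + 1)))`: for `λ = 1` it makes the differences
summable like `1/k²`, and for `|λ| ≥ 1`, `λ ≠ 1` it bounds `|a_{k+1} - a_k|` below by
`|λ - 1|/(k + 1)` up to a summable error, so the differences dominate a harmonic series.
-/

open Filter Topology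

/-- Membership in the complex space `X` (0-based indexing: `x k` is the
paper's `x_{k+1}`). -/
def MemXC (x : ℕ → ℂ) : Prop :=
  Summable (fun k : ℕ => ‖x (k + 1) / ((k : ℂ) + 2) - x k / ((k : ℂ) + 1)‖) ∧
  Tendsto (fun k : ℕ => x k / ((k : ℂ) + 1)) atTop (𝓝 0)

lemma Complex.norm_natCast_add_one (k : ℕ) : ‖(k : ℂ) + 1‖ = k + 1 := by
  exact_mod_cast Complex.norm_natCast (k + 1)

lemma Complex.norm_natCast_add_two (k : ℕ) : ‖(k : ℂ) + 2‖ = k + 2 := by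
  exact_mod_cast Complex.norm_natCast (k + 2)

lemma summable_norm_one_div_mul_add_two :
    Summable fun k : ℕ => ‖(1 : ℂ) / (((k : ℂ) + 1) * ((k : ℂ) + 2))‖ := by
  refine .of_nonneg_of_le (fun _ => norm_nonneg _) (fun k => ?_)
    (summable_pow_div_add (1 : ℂ) 2 1 one_lt_two)
  simp only [norm_div, norm_mul, norm_pow, norm_one, Complex.norm_natCast_add_one,
    Complex.norm_natCast_add_two, Nat.cast_one]
  gcongr
  linarith

lemma not_summable_norm_div_natCast_add_two {c : ℂ} (hc : c ≠ 0) :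
    ¬ Summable fun k : ℕ => ‖c / ((k : ℂ) + 2)‖ := by
  intro h
  have harmonic : Summable fun n : ℕ => ‖c‖ * (1 / (n : ℝ)) := by
    refine (summable_nat_add_iff 2).mp ?_
    simpa [norm_div, div_eq_mul_inv, Complex.norm_natCast_add_two] using h
  exact Real.not_summable_one_div_natCast
    ((summable_mul_left_iff (norm_ne_zero_iff.mpr hc)).mp harmonic)

lemma pow_div_natCast_add_two_sub (l : ℂ) (k : ℕ) :
    l ^ (k + 1 + 1) / ((k : ℂ) + 2) - l ^ (k + 1) / ((k : ℂ) + 1) =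
      l ^ (k + 1) * ((l - 1) / ((k : ℂ) + 2) - 1 / (((k : ℂ) + 1) * ((k : ℂ) + 2))) := by
  have h1 : (k : ℂ) + 1 ≠ 0 := Nat.cast_add_one_ne_zero k
  have h2 : (k : ℂ) + 2 ≠ 0 := by exact_mod_cast Nat.succ_ne_zero (k + 1)
  field_simp
  ring

lemma memXC_of_summable_norm {x : ℕ → ℂ} (hx : Summable fun k => ‖x k / ((k : ℂ) + 1)‖) :
    MemXC x := by
  have hshift : Summable fun k => ‖x (k + 1) / ((k : ℂ) + 2)‖ :=
    ((summable_nat_add_iff 1).mpr hx).congr fun k => by push_cast; ring_nf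
  exact ⟨.of_nonneg_of_le (fun _ => norm_nonneg _) (fun _ => norm_sub_le _ _) (hshift.add hx),
    hx.of_norm.tendsto_atTop_zero⟩

lemma memXC_pow_of_norm_lt_one {l : ℂ} (hl : ‖l‖ < 1) : MemXC fun k => l ^ (k + 1) := by
  refine memXC_of_summable_norm <| .of_nonneg_of_le (fun _ => norm_nonneg _) (fun k => ?_)
    ((summable_nat_add_iff 1).mpr (summable_geometric_of_lt_one (norm_nonneg l) hl))
  rw [norm_div, norm_pow, Complex.norm_natCast_add_one]
  exact div_le_self (by positivity) (by linarith [k.cast_nonneg (α := ℝ)])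

lemma memXC_one : MemXC fun k => (1 : ℂ) ^ (k + 1) := by
  refine ⟨summable_norm_one_div_mul_add_two.congr fun k => ?_,
    by simpa using tendsto_one_div_add_atTop_nhds_zero_nat (𝕜 := ℂ)⟩
  rw [pow_div_natCast_add_two_sub]
  simp

lemma not_memXC_pow {l : ℂ} (hl : 1 ≤ ‖l‖) (hl1 : l ≠ 1) : ¬ MemXC fun k => l ^ (k + 1) := by
  rintro ⟨hsum, -⟩
  refine not_summable_norm_div_natCast_add_two (sub_ne_zero.mpr hl1) <|
    .of_nonneg_of_le (fun _ => norm_nonneg _) (fun k => ?_)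
      (hsum.add summable_norm_one_div_mul_add_two)
  have hdrop : ‖(l - 1) / ((k : ℂ) + 2) - 1 / (((k : ℂ) + 1) * ((k : ℂ) + 2))‖ ≤
      ‖l ^ (k + 1 + 1) / ((k : ℂ) + 2) - l ^ (k + 1) / ((k : ℂ) + 1)‖ := by
    rw [pow_div_natCast_add_two_sub, norm_mul, norm_pow]
    exact le_mul_of_one_le_left (norm_nonneg _) (one_le_pow₀ hl)
  linarith [norm_le_norm_sub_add ((l - 1) / ((k : ℂ) + 2))
    (1 / (((k : ℂ) + 1) * ((k : ℂ) + 2)))]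

/-- For `λ ∈ ℂ`, the exponential sequence `(λ^k)_{k≥1}` belongs to `X`
iff `|λ| < 1` or `λ = 1`. -/
theorem stmt_2 (l : ℂ) :
    MemXC (fun k : ℕ => l ^ (k + 1)) ↔ (‖l‖ < 1 ∨ l = 1) := by
  constructor
  · intro hX
    by_contra! h
    exact not_memXC_pow h.1 h.2 hX
  · rintro (hl | rfl)
    · exact memXC_pow_of_norm_lt_one hl
    · exact memXC_one
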